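/- Let X ⊆ ℝ^D be open and d ≥ 1. The uniformly characteristic function (S, x) ↦ χ_S(x) (equal to 1 if x ∈ S and 0 otherwise) is (δ_{Σ_d} × ρ → ρ_<^{(d−1)})-continuous: there exists a continuous function Φ, defined on the set of all pairs (s, p) where s is a δ_{Σ_d}-name of some S ∈ Σ_d(X) and p is a ρ-name of some x ∈ X, such that Φ(s,p) is a ρ_<^{(d−1)}-name of χ_S(x). -/

import Mathlib

open Filter Topology

/- The name spaces are products of countable discrete sets; `ℚ` is taken discrete. -/
local instance : TopologicalSpace ℚ := ⊥

/-- Alternating suprema/infima in `EReal`; `true` starts with a supremum.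
`AltSupInf k b q` has `k+1` alternating sup/inf levels. -/
noncomputable def AltSupInf : ℕ → Bool → (ℕ → EReal) → EReal
  | 0, b, q => if b then ⨆ n, q n else ⨅ n, q n
  | k+1, b, q =>
      if b then ⨆ n, AltSupInf k false (fun m => q (Nat.pair n m))
      else ⨅ n, AltSupInf k true (fun m => q (Nat.pair n m))

/-- ρ_<^{(k)}-name of a real: `x = sup inf sup ⋯` (`k+1` alternating sup/inf,
starting with sup, taken in ℝ ∪ {±∞}). -/
noncomputable def IsRhoLtKName (k : ℕ) (q : ℕ → ℚ) (x : ℝ) : Prop :=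
  (x : EReal) = AltSupInf k true (fun n => ((q n : ℝ) : EReal))

/-- ρ-name of a point of ℝ^D: `|x - q n| ≤ 2^{-n}` for all `n`. -/
def IsRhoVecName (D : ℕ) (q : ℕ → (Fin D → ℚ)) (x : EuclideanSpace ℝ (Fin D)) : Prop :=
  ∀ n : ℕ, dist x (WithLp.toLp 2 (fun i => ((q n i : ℝ))) : EuclideanSpace ℝ (Fin D)) ≤ (2 : ℝ) ^ (-(n : ℤ))

/-- The open euclidean ball in ℝ^D with rational center and radius (empty if `r ≤ 0`). -/
def ratBall (D : ℕ) (c : Fin D → ℚ) (r : ℚ) : Set (EuclideanSpace ℝ (Fin D)) :=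
  Metric.ball (WithLp.toLp 2 (fun i => ((c i : ℝ))) : EuclideanSpace ℝ (Fin D)) (r : ℝ)

/-- `IsSigmaName D X d p S` : `p` is a δ_{Σ_{d+1}}-name of `S ∈ Σ_{d+1}(X)`:
for `d = 0`, a θ_<-name (a list of rational open balls inside `X` whose union is `S`);
for `d+1`, via the pairing a sequence of δ_{Σ_d}-names of sets `T m` with
`S = ⋃ m, X ∖ T m`. -/
def IsSigmaName (D : ℕ) (X : Set (EuclideanSpace ℝ (Fin D))) :
    ℕ → (ℕ → (Fin D → ℚ) × ℚ) → Set (EuclideanSpace ℝ (Fin D)) → Prop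
  | 0, p, S => (∀ k, ratBall D (p k).1 (p k).2 ⊆ X) ∧ S = ⋃ k, ratBall D (p k).1 (p k).2
  | d+1, p, S => ∃ T : ℕ → Set (EuclideanSpace ℝ (Fin D)),
      (∀ m, IsSigmaName D X d (fun k => p (Nat.pair m k)) (T m)) ∧ S = ⋃ m, X \ T m

/-! ### Auxiliary material for the proof -/

section Aux

/-- The "flip" `y ↦ 1 - y` on `EReal` is an involution. -/
lemma flip_invol (y : EReal) : 1 - (1 - y) = y := by
  induction y using EReal.rec with
  | bot => rw [show (1:EReal) - ⊥ = ⊤ from EReal.coe_sub_bot 1]; exact EReal.sub_top 1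
  | coe x =>
      rw [show (1 : EReal) = ((1:ℝ) : EReal) from rfl, ← EReal.coe_sub, ← EReal.coe_sub]
      norm_num
  | top => rw [EReal.sub_top]; exact EReal.coe_sub_bot 1

lemma flip_anti {a b : EReal} (h : a ≤ b) : 1 - b ≤ 1 - a := EReal.sub_le_sub le_rfl h

lemma flip_iSup (q : ℕ → EReal) : 1 - (⨆ n, q n) = ⨅ n, (1 - q n) := by
  apply le_antisymm
  · exact le_iInf fun n => flip_anti (le_iSup q n)
  · have h : (⨆ n, q n) ≤ 1 - ⨅ n, (1 - q n) := by
      refine iSup_le fun n => ?_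
      calc q n = 1 - (1 - q n) := (flip_invol _).symm
        _ ≤ 1 - ⨅ m, (1 - q m) := flip_anti (iInf_le _ n)
    calc ⨅ n, (1 - q n) = 1 - (1 - ⨅ n, (1 - q n)) := (flip_invol _).symm
      _ ≤ 1 - ⨆ n, q n := flip_anti h

lemma flip_iInf (q : ℕ → EReal) : 1 - (⨅ n, q n) = ⨆ n, (1 - q n) := by
  have := flip_iSup (fun n => 1 - q n)
  simp only [flip_invol] at this
  rw [← this, flip_invol]

lemma alt_flip : ∀ (k : ℕ) (b : Bool) (q : ℕ → EReal),
    AltSupInf k b (fun n => 1 - q n) = 1 - AltSupInf k (!b) q := by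
  intro k
  induction k with
  | zero =>
      rintro (_|_) q
      · show (⨅ n, (fun j => 1 - q j) n) = 1 - ⨆ n, q n
        exact (flip_iSup q).symm
      · show (⨆ n, (fun j => 1 - q j) n) = 1 - ⨅ n, q n
        exact (flip_iInf q).symm
  | succ k ih =>
      rintro (_|_) q
      · show (⨅ n, AltSupInf k true fun m => (fun j => 1 - q j) (Nat.pair n m)) =
            1 - ⨆ n, AltSupInf k false fun m => q (Nat.pair n m)
        rw [flip_iSup]
        exact iInf_congr fun n => ih true _
      · show (⨆ n, AltSupInf k false fun m => (fun j => 1 - q j) (Nat.pair n m)) =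
            1 - ⨅ n, AltSupInf k true fun m => q (Nat.pair n m)
        rw [flip_iInf]
        exact iSup_congr fun n => ih false _

/-- The real point of `ℝ^D` associated with a rational point. -/
def toE (D : ℕ) (a : Fin D → ℚ) : EuclideanSpace ℝ (Fin D) := WithLp.toLp 2 (fun i => (a i : ℝ))

lemma mem_ratBall {D : ℕ} {c : Fin D → ℚ} {r : ℚ} {x : EuclideanSpace ℝ (Fin D)} :
    x ∈ ratBall D c r ↔ dist x (toE D c) < (r : ℝ) := Metric.mem_ball

/-- Rational test: the `n`-th rational approximation `a` of a point certifies
membership of the point in the rational ball `B(c, r)`. -/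
def ballTest (D : ℕ) (c : Fin D → ℚ) (r : ℚ) (a : Fin D → ℚ) (n : ℕ) : Prop :=
  0 < r - (2:ℚ)^(-(n:ℤ)) ∧ ∑ i, (a i - c i)^2 < (r - (2:ℚ)^(-(n:ℤ)))^2

instance (D c r a n) : Decidable (ballTest D c r a n) := by unfold ballTest; infer_instance

lemma rat_dist (D : ℕ) (a c : Fin D → ℚ) :
    dist (toE D a) (toE D c) = Real.sqrt ((∑ i, (a i - c i)^2 : ℚ) : ℝ) := by
  rw [EuclideanSpace.dist_eq]
  congr 1
  push_cast
  refine Finset.sum_congr rfl fun i _ => ?_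
  rw [show toE D a i = ((a i : ℝ)) from rfl, show toE D c i = ((c i : ℝ)) from rfl,
    Real.dist_eq, sq_abs]

lemma ballTest_sound {D : ℕ} {c : Fin D → ℚ} {r : ℚ} {a : Fin D → ℚ} {n : ℕ}
    {x : EuclideanSpace ℝ (Fin D)}
    (hx : dist x (toE D a) ≤ (2:ℝ) ^ (-(n:ℤ)))
    (h : ballTest D c r a n) : x ∈ ratBall D c r := by
  obtain ⟨h1, h2⟩ := h
  set e : ℝ := (r : ℝ) - (2:ℝ)^(-(n:ℤ)) with he_def
  have he : (0:ℝ) < e := by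
    have := (Rat.cast_lt (K := ℝ)).2 h1
    push_cast at this
    rw [he_def]; exact this
  have h2' : ((∑ i, (a i - c i)^2 : ℚ) : ℝ) < e^2 := by
    have := (Rat.cast_lt (K := ℝ)).2 h2
    push_cast at this
    calc ((∑ i, (a i - c i)^2 : ℚ) : ℝ) = ∑ i, ((a i : ℝ) - (c i : ℝ))^2 := by push_cast; ring
      _ < e^2 := by rw [he_def]; convert this using 2
  have hd : dist (toE D a) (toE D c) < e := by
    rw [rat_dist]
    rw [show e = Real.sqrt (e^2) from (Real.sqrt_sq he.le).symm]
    exact Real.sqrt_lt_sqrt (by positivity) h2'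
  rw [mem_ratBall]
  have htri := dist_triangle x (toE D a) (toE D c)
  have h2pos : (0:ℝ) < (2:ℝ)^(-(n:ℤ)) := by positivity
  simp only [he_def] at hd
  linarith

lemma ballTest_complete {D : ℕ} {c : Fin D → ℚ} {r : ℚ}
    {x : EuclideanSpace ℝ (Fin D)} (hx : x ∈ ratBall D c r)
    (p : ℕ → Fin D → ℚ)
    (hp : ∀ n : ℕ, dist x (toE D (p n)) ≤ (2:ℝ)^(-(n:ℤ))) :
    ∃ n, ballTest D c r (p n) n := by
  rw [mem_ratBall] at hx
  have hpos : 0 < ((r:ℝ) - dist x (toE D c)) / 2 := by linarith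
  obtain ⟨n, hn⟩ := exists_pow_lt_of_lt_one hpos (by norm_num : (1:ℝ)/2 < 1)
  have h2n : (2:ℝ)^(-(n:ℤ)) = ((1:ℝ)/2)^n := by
    rw [zpow_neg, zpow_natCast, one_div, inv_pow]
  have key : 2 * (2:ℝ)^(-(n:ℤ)) < (r:ℝ) - dist x (toE D c) := by rw [h2n]; linarith
  have hd0 : (0:ℝ) ≤ dist x (toE D c) := dist_nonneg
  have h2pos : (0:ℝ) < (2:ℝ)^(-(n:ℤ)) := by positivity
  have hdpn : dist (toE D (p n)) (toE D c) < (r:ℝ) - (2:ℝ)^(-(n:ℤ)) := by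
    have htri := dist_triangle (toE D (p n)) x (toE D c)
    have hpn := hp n
    rw [dist_comm] at hpn
    linarith
  have hepos : (0:ℝ) < (r:ℝ) - (2:ℝ)^(-(n:ℤ)) := lt_of_le_of_lt dist_nonneg hdpn
  refine ⟨n, ?_, ?_⟩
  · have : ((0:ℚ):ℝ) < ((r - (2:ℚ)^(-(n:ℤ)) : ℚ):ℝ) := by push_cast; exact hepos
    exact_mod_cast this
  · have hsum : ((∑ i, (p n i - c i)^2 : ℚ) : ℝ) = dist (toE D (p n)) (toE D c) ^ 2 := by
      rw [rat_dist, Real.sq_sqrt (by positivity)]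
    have hreal : ((∑ i, (p n i - c i)^2 : ℚ) : ℝ) < ((r:ℝ) - (2:ℝ)^(-(n:ℤ)))^2 := by
      rw [hsum]
      exact pow_lt_pow_left₀ hdpn dist_nonneg (by norm_num)
    have : ((∑ i, (p n i - c i)^2 : ℚ):ℝ) < (((r - (2:ℚ)^(-(n:ℤ)) : ℚ)):ℝ)^2 := by
      push_cast
      push_cast at hreal
      convert hreal using 2
    exact_mod_cast this

/-- The realizer of the uniformly characteristic function, by induction on `d`. -/
def myPhi (D : ℕ) : ℕ → (ℕ → (Fin D → ℚ) × ℚ) → (ℕ → (Fin D → ℚ)) → ℕ → ℚ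
  | 0, s, p, j =>
      if ballTest D (s j.unpair.1).1 (s j.unpair.1).2 (p j.unpair.2) j.unpair.2 then 1 else 0
  | d+1, s, p, j => 1 - myPhi D d (fun k => s (Nat.pair j.unpair.1 k)) p j.unpair.2

local instance : DiscreteTopology ℚ := ⟨rfl⟩

lemma myPhi_cont (D : ℕ) : ∀ d : ℕ,
    Continuous (fun sp : (ℕ → (Fin D → ℚ) × ℚ) × (ℕ → (Fin D → ℚ)) =>
      fun j => myPhi D d sp.1 sp.2 j) := by
  intro d
  induction d with
  | zero =>
      apply continuous_pi
      intro j
      simp only [myPhi]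
      have h1 : Continuous (fun sp : (ℕ → (Fin D → ℚ) × ℚ) × (ℕ → (Fin D → ℚ)) =>
          (sp.1 j.unpair.1, sp.2 j.unpair.2)) :=
        ((continuous_apply _).comp continuous_fst).prodMk
          ((continuous_apply _).comp continuous_snd)
      exact (continuous_of_discreteTopology
        (f := fun y : ((Fin D → ℚ) × ℚ) × (Fin D → ℚ) =>
          if ballTest D y.1.1 y.1.2 y.2 j.unpair.2 then (1:ℚ) else 0)).comp h1
  | succ d ih =>
      apply continuous_pi
      intro j
      simp only [myPhi]
      have hmap : Continuous (fun sp : (ℕ → (Fin D → ℚ) × ℚ) × (ℕ → (Fin D → ℚ)) =>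
          (((fun k => sp.1 (Nat.pair j.unpair.1 k)), sp.2) :
            (ℕ → (Fin D → ℚ) × ℚ) × (ℕ → (Fin D → ℚ)))) :=
        (continuous_pi fun k => (continuous_apply _).comp continuous_fst).prodMk
          continuous_snd
      have hin : Continuous (fun sp : (ℕ → (Fin D → ℚ) × ℚ) × (ℕ → (Fin D → ℚ)) =>
          myPhi D d (fun k => sp.1 (Nat.pair j.unpair.1 k)) sp.2 j.unpair.2) :=
        (continuous_apply j.unpair.2).comp (ih.comp hmap)
      exact (continuous_of_discreteTopology (f := fun a : ℚ => 1 - a)).comp hin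

lemma myPhi_correct (D : ℕ) (X : Set (EuclideanSpace ℝ (Fin D))) :
    ∀ (d : ℕ) (s : ℕ → (Fin D → ℚ) × ℚ) (S : Set (EuclideanSpace ℝ (Fin D))),
      IsSigmaName D X d s S → ∀ x ∈ X, ∀ p : ℕ → (Fin D → ℚ), IsRhoVecName D p x →
      ((Set.indicator S (fun _ => (1:ℝ)) x : ℝ) : EReal)
        = AltSupInf d true (fun n => ((myPhi D d s p n : ℝ) : EReal)) := by
  intro d
  induction d with
  | zero =>
      rintro s S ⟨hsub, rfl⟩ x hx p hp
      show _ = ⨆ n, (((myPhi D 0 s p n : ℝ) : EReal))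
      by_cases hxS : x ∈ ⋃ k, ratBall D (s k).1 (s k).2
      · rw [Set.indicator_of_mem hxS]
        apply le_antisymm
        · obtain ⟨_, ⟨k, rfl⟩, hk⟩ := hxS
          obtain ⟨n, hn⟩ := ballTest_complete hk p hp
          have : ((myPhi D 0 s p (Nat.pair k n) : ℝ) : EReal) = ((1:ℝ) : EReal) := by
            simp only [myPhi, Nat.unpair_pair, if_pos hn]
            norm_cast
          exact this ▸ le_iSup (fun n => ((myPhi D 0 s p n : ℝ) : EReal)) (Nat.pair k n)
        · refine iSup_le fun n => ?_
          have hb : ((myPhi D 0 s p n : ℚ) : ℝ) ≤ 1 := by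
            simp only [myPhi]; split <;> norm_num
          exact_mod_cast hb
      · rw [Set.indicator_of_notMem hxS]
        have hz : ∀ n, ((myPhi D 0 s p n : ℝ) : EReal) = ((0:ℝ) : EReal) := by
          intro n
          have hbt : ¬ ballTest D (s n.unpair.1).1 (s n.unpair.1).2 (p n.unpair.2)
              n.unpair.2 := fun hbt =>
            hxS (Set.mem_iUnion.2 ⟨n.unpair.1, ballTest_sound (hp n.unpair.2) hbt⟩)
          simp only [myPhi, if_neg hbt]
          norm_cast
        simp only [hz, iSup_const]
  | succ d ih =>
      rintro s S ⟨T, hT, rfl⟩ x hx p hp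
      have hstep : AltSupInf (d+1) true (fun n => ((myPhi D (d+1) s p n : ℝ) : EReal))
          = ⨆ m, ((1 - Set.indicator (T m) (fun _ => (1:ℝ)) x : ℝ) : EReal) := by
        show (⨆ m, AltSupInf d false fun j =>
            ((myPhi D (d+1) s p (Nat.pair m j) : ℝ) : EReal)) = _
        refine iSup_congr fun m => ?_
        have hq : (fun j => ((myPhi D (d+1) s p (Nat.pair m j) : ℝ) : EReal))
            = fun j => 1 - ((myPhi D d (fun k => s (Nat.pair m k)) p j : ℝ) : EReal) := by
          funext j
          simp only [myPhi, Nat.unpair_pair]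
          push_cast
          rfl
        rw [hq, alt_flip d false]
        rw [show (!false) = true from rfl, ← ih _ _ (hT m) x hx p hp]
        rw [show (1 : EReal) = ((1:ℝ) : EReal) from rfl, ← EReal.coe_sub]
      rw [hstep]
      by_cases hxS : x ∈ ⋃ m, X \ T m
      · rw [Set.indicator_of_mem hxS]
        obtain ⟨_, ⟨m, rfl⟩, hm⟩ := hxS
        apply le_antisymm
        · have : ((1 - Set.indicator (T m) (fun _ => (1:ℝ)) x : ℝ) : EReal) = ((1:ℝ):EReal) := by
            rw [Set.indicator_of_notMem hm.2]; norm_num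
          exact this ▸ le_iSup
            (fun m => ((1 - Set.indicator (T m) (fun _ => (1:ℝ)) x : ℝ) : EReal)) m
        · refine iSup_le fun m' => ?_
          have : (1 - Set.indicator (T m') (fun _ => (1:ℝ)) x : ℝ) ≤ 1 := by
            have := Set.indicator_nonneg (fun _ _ => by norm_num : ∀ a ∈ T m',
              (0:ℝ) ≤ (fun _ => (1:ℝ)) a) x
            linarith
          exact_mod_cast this
      · rw [Set.indicator_of_notMem hxS]
        have hz : ∀ m, ((1 - Set.indicator (T m) (fun _ => (1:ℝ)) x : ℝ) : EReal)
            = ((0:ℝ) : EReal) := by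
          intro m
          have hxT : x ∈ T m := by
            by_contra hxT
            exact hxS (Set.mem_iUnion.2 ⟨m, hx, hxT⟩)
          rw [Set.indicator_of_mem hxT]; norm_num
        simp only [hz, iSup_const]

end Aux

/-- For open `X ⊆ ℝ^D` and `d ≥ 1`: the uniformly characteristic
function `(S, x) ↦ χ_S(x)` is (δ_{Σ_d} × ρ → ρ_<^{(d-1)})-continuous. -/
theorem stmt18 (D : ℕ) (X : Set (EuclideanSpace ℝ (Fin D))) (hX : IsOpen X)
    (d : ℕ) (hd : 1 ≤ d) :
    ∃ Φ : ((ℕ → (Fin D → ℚ) × ℚ) × (ℕ → (Fin D → ℚ))) → (ℕ → ℚ),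
      ContinuousOn Φ {sp | (∃ S : Set (EuclideanSpace ℝ (Fin D)),
          IsSigmaName D X (d - 1) sp.1 S) ∧ ∃ x ∈ X, IsRhoVecName D sp.2 x} ∧
      ∀ (S : Set (EuclideanSpace ℝ (Fin D))) (s : ℕ → (Fin D → ℚ) × ℚ),
        IsSigmaName D X (d - 1) s S →
        ∀ x ∈ X, ∀ p : ℕ → (Fin D → ℚ), IsRhoVecName D p x →
          IsRhoLtKName (d - 1) (Φ (s, p)) (Set.indicator S (fun _ => (1 : ℝ)) x) := by
  refine ⟨fun sp => fun j => myPhi D (d-1) sp.1 sp.2 j, (myPhi_cont D (d-1)).continuousOn, ?_⟩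
  intro S s hs x hx p hp
  exact myPhi_correct D X (d-1) s S hs x hx p hp
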